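/- arXiv:2008.00843 — 2 statements merged into one kernel-verified Lean document; each statement's English description precedes it below -/
import Mathlib

section
/- If p is a profile whose size |p| = ∑_i p(i) is a prime number, then p is irreducible: whenever p = q × r for profiles q, r, either q = 1_P or r = 1_P. -/
/-- A profile: a finitely supported sequence of naturals whose nonzero values
form an initial segment of `ℕ`. -/
def IsProfile (p : ℕ → ℕ) : Prop :=
  (∃ N, ∀ i, N ≤ i → p i = 0) ∧ (∀ i, p i = 0 → p (i + 1) = 0)

/-- Pointwise sum of profiles. -/
def padd (p q : ℕ → ℕ) : ℕ → ℕ := fun i => p i + q i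

/-- Product of profiles:
`(p × q)(i) = p(i)·∑_{j≤i} q(j) + q(i)·∑_{j≤i} p(j) − p(i)·q(i)`. -/
def pmul (p q : ℕ → ℕ) : ℕ → ℕ := fun i =>
  p i * (∑ j ∈ Finset.range (i + 1), q j) + q i * (∑ j ∈ Finset.range (i + 1), p j)
    - p i * q i

/-- The zero profile `0_P`. -/
def pzero : ℕ → ℕ := fun _ => 0

/-- The unit profile `1_P`. -/
def pone : ℕ → ℕ := fun i => if i = 0 then 1 else 0

/-- The size of a profile: the (finite) sum of its values. -/
noncomputable def psize (p : ℕ → ℕ) : ℕ := ∑ᶠ i, p i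

open Finset

lemma sum_pmul (q r : ℕ → ℕ) (N : ℕ) :
    ∑ i ∈ range N, pmul q r i =
      (∑ j ∈ range N, q j) * (∑ j ∈ range N, r j) := by
  induction N with
  | zero => simp
  | succ n ih =>
    rw [sum_range_succ, ih]
    unfold pmul
    rw [sum_range_succ q, sum_range_succ r]
    set a := ∑ j ∈ range n, q j with ha
    set b := ∑ j ∈ range n, r j with hb
    have h1 : q n * (b + r n) = q n * b + q n * r n := by ring
    have h2 : r n * (a + q n) = r n * a + q n * r n := by ring
    rw [h1, h2]
    set x := q n * b
    set y := r n * a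
    set z := q n * r n
    have : x + z + (y + z) - z = x + y + z := by omega
    rw [this]
    ring

lemma psize_eq_sum {q : ℕ → ℕ} {N : ℕ} (h : ∀ i, N ≤ i → q i = 0) :
    psize q = ∑ i ∈ range N, q i := by
  apply finsum_eq_finset_sum_of_support_subset
  intro i hi
  simp only [Function.mem_support] at hi
  simp only [coe_range, Set.mem_Iio]
  by_contra hN
  exact hi (h i (le_of_not_gt hN))

lemma profile_size_one {q : ℕ → ℕ} (hq : IsProfile q) (h1 : psize q = 1) :
    q = pone := by
  obtain ⟨⟨N, hN⟩, hstep⟩ := hq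
  have hN' : ∀ i, N + 1 ≤ i → q i = 0 := fun i hi => hN i (by omega)
  rw [psize_eq_sum hN'] at h1
  have hq0 : q 0 ≠ 0 := by
    intro h0
    have hall : ∀ i, q i = 0 := by
      intro i
      induction i with
      | zero => exact h0
      | succ j ihj => exact hstep j ihj
    simp [hall] at h1
  have hmem : (0 : ℕ) ∈ range (N + 1) := by simp
  rw [← Finset.add_sum_erase _ q hmem] at h1
  have hq0le : 1 ≤ q 0 := Nat.one_le_iff_ne_zero.mpr hq0
  have hrest : ∑ i ∈ (range (N + 1)).erase 0, q i = 0 := by omega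
  have hq0eq : q 0 = 1 := by omega
  have hz : ∀ i ∈ (range (N + 1)).erase 0, q i = 0 :=
    Finset.sum_eq_zero_iff.mp hrest
  funext i
  cases i with
  | zero => simpa [pone] using hq0eq
  | succ j =>
    simp only [pone, if_neg (Nat.succ_ne_zero j)]
    by_cases hj : j + 1 < N + 1
    · exact hz _ (by simp [Finset.mem_erase, hj])
    · exact hN' _ (by omega)

/-- A profile of prime size is irreducible. -/
theorem prime_size_irreducible (p : ℕ → ℕ) (hp : IsProfile p)
    (hprime : Nat.Prime (psize p)) :
    ∀ q r : ℕ → ℕ, IsProfile q → IsProfile r → p = pmul q r →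
      q = pone ∨ r = pone := by
  intro q r hq hr hpqr
  obtain ⟨Nq, hNq⟩ := hq.1
  obtain ⟨Nr, hNr⟩ := hr.1
  set N := max Nq Nr with hNdef
  have hqz : ∀ i, N ≤ i → q i = 0 := fun i hi => hNq i (le_trans (le_max_left _ _) hi)
  have hrz : ∀ i, N ≤ i → r i = 0 := fun i hi => hNr i (le_trans (le_max_right _ _) hi)
  have hpz : ∀ i, N ≤ i → p i = 0 := by
    intro i hi
    rw [hpqr]
    simp [pmul, hqz i hi, hrz i hi]
  have hsize : psize p = psize q * psize r := by
    rw [psize_eq_sum hpz, psize_eq_sum hqz, psize_eq_sum hrz, hpqr, sum_pmul]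
  rw [hsize] at hprime
  rcases Nat.prime_mul_iff.mp hprime with ⟨_, h1⟩ | ⟨_, h1⟩
  · right; exact profile_size_one hr h1
  · left; exact profile_size_one hq h1
end

section
/- The asymptotic density of reducible profiles is zero: letting R(n) be the number of reducible profiles of size at most n and T(n) be the number of all profiles of size at most n, the real sequence R(n) / T(n) tends to 0 as n → ∞. -/
/-- A profile is reducible if it is a product of two non-unit profiles. -/
def PReducible (p : ℕ → ℕ) : Prop :=
  ∃ q r : ℕ → ℕ, IsProfile q ∧ IsProfile r ∧ q ≠ pone ∧ r ≠ pone ∧ p = pmul q r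

/-- The number of reducible profiles of size at most `n`. -/
noncomputable def numReducible (n : ℕ) : ℕ :=
  Nat.card {p : ℕ → ℕ // IsProfile p ∧ PReducible p ∧ psize p ≤ n}

/-- The number of profiles of size at most `n`. -/
noncomputable def numProfiles (n : ℕ) : ℕ :=
  Nat.card {p : ℕ → ℕ // IsProfile p ∧ psize p ≤ n}

open Finset Filter Topology

lemma IsProfile.eq_zero_of_le {p : ℕ → ℕ} (hp : IsProfile p) {k i : ℕ} (hk : p k = 0)
    (hki : k ≤ i) : p i = 0 := by
  induction i, hki using Nat.le_induction with
  | base => exact hk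
  | succ i _ ih => exact hp.2 i ih

lemma psize_eq_sum_range {p : ℕ → ℕ} {N : ℕ} (h : ∀ i, N ≤ i → p i = 0) :
    psize p = ∑ i ∈ range N, p i := by
  refine finsum_eq_sum_of_support_subset p fun i hi => ?_
  by_contra hiN
  exact hi (h i (by simpa using hiN))

lemma pmul_comm (p q : ℕ → ℕ) : pmul p q = pmul q p := by
  funext i
  simp only [pmul, Nat.mul_comm (q i) (p i), Nat.add_comm]

lemma pmul_apply (p q : ℕ → ℕ) (i : ℕ) :
    pmul p q i = p i * ∑ j ∈ range i, q j + q i * ∑ j ∈ range i, p j + p i * q i := by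
  simp only [pmul, sum_range_succ]
  exact Nat.sub_eq_of_eq_add (by ring)

lemma sum_range_pmul (p q : ℕ → ℕ) (N : ℕ) :
    ∑ i ∈ range N, pmul p q i = (∑ i ∈ range N, p i) * ∑ i ∈ range N, q i := by
  induction N with
  | zero => simp
  | succ N ih =>
    rw [sum_range_succ, ih, pmul_apply, sum_range_succ p, sum_range_succ q]
    ring

lemma psize_pmul {p q : ℕ → ℕ} (hp : IsProfile p) (hq : IsProfile q) :
    psize (pmul p q) = psize p * psize q := by
  obtain ⟨N₁, h₁⟩ := hp.1
  obtain ⟨N₂, h₂⟩ := hq.1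
  have hp' : ∀ i, N₁ + N₂ ≤ i → p i = 0 := fun i hi => h₁ i (by omega)
  have hq' : ∀ i, N₁ + N₂ ≤ i → q i = 0 := fun i hi => h₂ i (by omega)
  have hpq : ∀ i, N₁ + N₂ ≤ i → pmul p q i = 0 := fun i hi => by
    simp [pmul, hp' i hi, hq' i hi]
  rw [psize_eq_sum_range hpq, psize_eq_sum_range hp', psize_eq_sum_range hq', sum_range_pmul]

lemma pmul_pzero (p : ℕ → ℕ) : pmul p pzero = pzero := by
  funext i
  simp [pmul, pzero]

lemma pzero_pmul (p : ℕ → ℕ) : pmul pzero p = pzero := by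
  rw [pmul_comm, pmul_pzero]

def ofList (l : List ℕ) : ℕ → ℕ := fun i => l.getD i 0

lemma ofList_apply_of_lt {l : List ℕ} {i : ℕ} (hi : i < l.length) : ofList l i = l[i] :=
  List.getD_eq_getElem l 0 hi

lemma ofList_apply_of_le {l : List ℕ} {i : ℕ} (hi : l.length ≤ i) : ofList l i = 0 :=
  List.getD_eq_default l 0 hi

lemma psize_ofList (l : List ℕ) : psize (ofList l) = l.sum := by
  rw [psize_eq_sum_range fun i => ofList_apply_of_le]
  induction l with
  | nil => rfl
  | cons a l ih =>
    rw [List.length_cons, sum_range_succ', List.sum_cons, ← ih, Nat.add_comm]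
    rfl

lemma ofList_eq_zero_iff {l : List ℕ} (hl : ∀ a ∈ l, 0 < a) {i : ℕ} :
    ofList l i = 0 ↔ l.length ≤ i := by
  refine ⟨fun h => ?_, ofList_apply_of_le⟩
  by_contra hi
  rw [ofList_apply_of_lt (Nat.lt_of_not_le hi)] at h
  exact (hl _ (List.getElem_mem _)).ne' h

lemma isProfile_ofList {l : List ℕ} (hl : ∀ a ∈ l, 0 < a) : IsProfile (ofList l) := by
  refine ⟨⟨l.length, fun i => ofList_apply_of_le⟩, fun i hi => ?_⟩
  rw [ofList_eq_zero_iff hl] at hi ⊢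
  omega

lemma ofList_injOn : Set.InjOn ofList {l | ∀ a ∈ l, 0 < a} := by
  intro l₁ h₁ l₂ h₂ h
  have hzero (i : ℕ) : l₁.length ≤ i ↔ l₂.length ≤ i := by
    rw [← ofList_eq_zero_iff h₁, ← ofList_eq_zero_iff h₂, h]
  have hlen : l₁.length = l₂.length := le_antisymm ((hzero _).2 le_rfl) ((hzero _).1 le_rfl)
  refine List.ext_getElem hlen fun i hi₁ hi₂ => ?_
  rw [← ofList_apply_of_lt hi₁, ← ofList_apply_of_lt hi₂, h]

lemma IsProfile.exists_eq_ofList {p : ℕ → ℕ} (hp : IsProfile p) :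
    ∃ l : List ℕ, (∀ a ∈ l, 0 < a) ∧ ofList l = p := by
  obtain ⟨N, hN⟩ := hp.1
  have hex : ∃ k, p k = 0 := ⟨N, hN N le_rfl⟩
  refine ⟨(List.range (Nat.find hex)).map p, ?_, funext fun i => ?_⟩
  · simp only [List.mem_map, List.mem_range]
    rintro _ ⟨j, hj, rfl⟩
    exact Nat.pos_of_ne_zero (Nat.find_min hex hj)
  · rcases lt_or_ge i (Nat.find hex) with hi | hi
    · rw [ofList_apply_of_lt (by simpa using hi)]
      simp
    · rw [ofList_apply_of_le (by simpa using hi), hp.eq_zero_of_le (Nat.find_spec hex) hi]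

lemma two_le_psize {p : ℕ → ℕ} (hp : IsProfile p) (h₀ : p ≠ pzero) (h₁ : p ≠ pone) :
    2 ≤ psize p := by
  obtain ⟨l, hl, rfl⟩ := hp.exists_eq_ofList
  rw [psize_ofList]
  match l, hl with
  | [], _ => exact absurd (funext fun _ => rfl) h₀
  | [a], hl =>
    have ha : a ≠ 1 := by
      rintro rfl
      exact h₁ (funext fun i => by cases i <;> rfl)
    have := hl a (by simp)
    simp only [List.sum_cons, List.sum_nil]
    omega
  | a :: b :: t, hl =>
    exact le_trans (by simp) (List.length_le_sum_of_one_le _ hl)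

def profilesLE (n : ℕ) : Set (ℕ → ℕ) := {p | IsProfile p ∧ psize p ≤ n}

lemma numProfiles_eq_ncard (n : ℕ) : numProfiles n = (profilesLE n).ncard :=
  Nat.card_coe_set_eq _

lemma profilesLE_subset_range (n : ℕ) :
    profilesLE n ⊆ Set.range fun c : Composition (n + 1) => ofList c.blocks.dropLast := by
  rintro p ⟨hp, hpn⟩
  obtain ⟨l, hl, rfl⟩ := hp.exists_eq_ofList
  rw [psize_ofList] at hpn
  -- the slack `n - |p|`, shifted to be positive, becomes an extra last block
  refine ⟨⟨l ++ [n + 1 - l.sum], fun {a} ha => ?_, ?_⟩, by simp⟩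
  · rcases List.mem_append.1 ha with ha | ha
    · exact hl a ha
    · rw [List.mem_singleton.1 ha]
      omega
  · rw [List.sum_append, List.sum_singleton]
    omega

lemma finite_profilesLE (n : ℕ) : (profilesLE n).Finite :=
  (Set.finite_range _).subset (profilesLE_subset_range n)

lemma numProfiles_le (n : ℕ) : numProfiles n ≤ 2 ^ n :=
  calc numProfiles n
      ≤ (Set.range fun c : Composition (n + 1) => ofList c.blocks.dropLast).ncard := by
        rw [numProfiles_eq_ncard]
        exact Set.ncard_le_ncard (profilesLE_subset_range n) (Set.finite_range _)
    _ ≤ Nat.card (Composition (n + 1)) := by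
        rw [← Nat.card_coe_set_eq]
        exact Finite.card_range_le _
    _ = 2 ^ n := by rw [Nat.card_eq_fintype_card, composition_card, Nat.add_sub_cancel]

lemma pow_le_numProfiles (n : ℕ) : 2 ^ (n - 1) ≤ numProfiles n := by
  rw [← composition_card, ← Nat.card_eq_fintype_card, ← Set.ncard_univ, numProfiles_eq_ncard]
  refine Set.ncard_le_ncard_of_injOn (fun c => ofList c.blocks) (fun c _ => ?_)
    (fun c₁ _ c₂ _ h =>
      Composition.ext (ofList_injOn (fun _ => c₁.blocks_pos) (fun _ => c₂.blocks_pos) h))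
    (finite_profilesLE n)
  exact ⟨isProfile_ofList fun _ => c.blocks_pos, by rw [psize_ofList, c.blocks_sum]⟩

lemma le_sqrt_and_le_half {a b n : ℕ} (ha : 2 ≤ a) (hab : a ≤ b) (h : a * b ≤ n) :
    a ≤ n.sqrt ∧ b ≤ n / 2 :=
  ⟨Nat.le_sqrt.2 ((Nat.mul_le_mul_left a hab).trans h),
    (Nat.le_div_iff_mul_le two_pos).2 (by nlinarith)⟩

lemma reducible_subset (n : ℕ) : {p | IsProfile p ∧ PReducible p ∧ psize p ≤ n} ⊆
    insert pzero (Set.image2 pmul (profilesLE n.sqrt) (profilesLE (n / 2))) := by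
  rintro _ ⟨-, ⟨q, r, hq, hr, hq₁, hr₁, rfl⟩, hn⟩
  by_cases hq₀ : q = pzero
  · exact .inl (hq₀ ▸ pzero_pmul r)
  by_cases hr₀ : r = pzero
  · exact .inl (hr₀ ▸ pmul_pzero q)
  have hq₂ := two_le_psize hq hq₀ hq₁
  have hr₂ := two_le_psize hr hr₀ hr₁
  rw [psize_pmul hq hr] at hn
  refine .inr ?_
  rcases le_total (psize q) (psize r) with h | h
  · obtain ⟨hq', hr'⟩ := le_sqrt_and_le_half hq₂ h hn
    exact Set.mem_image2_of_mem ⟨hq, hq'⟩ ⟨hr, hr'⟩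
  · obtain ⟨hr', hq'⟩ := le_sqrt_and_le_half hr₂ h (Nat.mul_comm _ _ ▸ hn)
    exact pmul_comm r q ▸ Set.mem_image2_of_mem ⟨hr, hr'⟩ ⟨hq, hq'⟩

lemma numReducible_le (n : ℕ) :
    numReducible n ≤ numProfiles n.sqrt * numProfiles (n / 2) + 1 := by
  have hsub := reducible_subset n
  rw [← Set.image_prod] at hsub
  have hfin := (finite_profilesLE n.sqrt).prod (finite_profilesLE (n / 2))
  rw [numProfiles_eq_ncard, numProfiles_eq_ncard, ← Set.ncard_prod]
  calc numReducible n ≤ _ := Set.ncard_le_ncard hsub ((hfin.image _).insert _)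
    _ ≤ _ := Set.ncard_insert_le _ _
    _ ≤ _ := Nat.add_le_add_right (Set.ncard_image_le hfin) 1

lemma sqrt_le_div_four {n : ℕ} (hn : 16 ≤ n) : n.sqrt ≤ n / 4 := by
  have h₄ : 4 ≤ n.sqrt := Nat.le_sqrt.2 hn
  have := Nat.mul_le_mul_right n.sqrt h₄
  have := Nat.sqrt_le n
  omega

lemma numReducible_mul_pow_le {n : ℕ} (hn : 16 ≤ n) :
    numReducible n * 2 ^ (n / 8) ≤ 4 * numProfiles n := by
  have hR : numReducible n ≤ 2 ^ (n / 4) * 2 ^ (n / 2) + 1 :=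
    (numReducible_le n).trans <| by
      gcongr
      · exact (numProfiles_le _).trans (Nat.pow_le_pow_right two_pos (sqrt_le_div_four hn))
      · exact numProfiles_le _
  have hX : 1 ≤ 2 ^ (n / 4) * 2 ^ (n / 2) := Nat.one_le_iff_ne_zero.2 (by positivity)
  calc numReducible n * 2 ^ (n / 8) ≤ (2 ^ (n / 4) * 2 ^ (n / 2) + 1) * 2 ^ (n / 8) := by gcongr
    _ ≤ 2 ^ (n / 4) * 2 ^ (n / 2) * 2 * 2 ^ (n / 8) := by gcongr; omega
    _ = 2 ^ (n / 4 + n / 2 + 1 + n / 8) := by rw [pow_add, pow_add, pow_add, pow_one]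
    _ ≤ 2 ^ (2 + (n - 1)) := Nat.pow_le_pow_right two_pos (by omega)
    _ ≤ 4 * numProfiles n := by rw [pow_add]; exact Nat.mul_le_mul_left 4 (pow_le_numProfiles n)

/-- The asymptotic density of reducible profiles is zero. -/
theorem density_reducible_zero :
    Filter.Tendsto (fun n : ℕ => (numReducible n : ℝ) / (numProfiles n : ℝ))
      Filter.atTop (nhds 0) := by
  have hbound : Tendsto (fun n : ℕ => (4 : ℝ) / 2 ^ (n / 8)) atTop (𝓝 0) :=
    tendsto_const_nhds.div_atTop <| (tendsto_pow_atTop_atTop_of_one_lt one_lt_two).comp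
      (Nat.tendsto_div_const_atTop (by norm_num))
  refine tendsto_of_tendsto_of_tendsto_of_le_of_le' tendsto_const_nhds hbound
    (.of_forall fun n => by positivity) ?_
  filter_upwards [eventually_ge_atTop 16] with n hn
  have hT : (0 : ℝ) < numProfiles n := by
    exact_mod_cast (Nat.two_pow_pos _).trans_le (pow_le_numProfiles n)
  rw [div_le_div_iff₀ hT (by positivity)]
  exact_mod_cast numReducible_mul_pow_le hn
end
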